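/- arXiv:0803.3365 — 6 statements merged into one kernel-verified Lean document; each statement's English description precedes it below -/
import Mathlib

section
/- Let V be a finite-dimensional vector space over a field of characteristic zero equipped with a finite direct sum decomposition V = ⊕_{n∈ℤ} V_n. For a ∈ ℤ let 𝔭_a = {X ∈ End(V) : X(V_n) ⊆ V_{n+a} for all n}, so that End(V) = ⊕_a 𝔭_a and [𝔭_a, 𝔭_b] ⊆ 𝔭_{a+b}. Let N ∈ 𝔭_{−1} and let Γ ∈ ⊕_{a≤−1} 𝔭_a (so Γ is nilpotent and e^{Γ} is defined). If e^{−Γ} N e^{Γ} ∈ 𝔭_{−1}, then [Γ, N] = 0; equivalently, e^{−Γ} N e^{Γ} = N. -/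
/-- For a direct sum decomposition `V = ⊕ₙ Vdec n`, the subspace
`𝔭_a = {X ∈ End(V) : X (Vdec n) ⊆ Vdec (n + a) for all n}` of `End(V)`. -/
def weightPart {k V : Type*} [Field k] [AddCommGroup V] [Module k V]
    (Vdec : ℤ → Submodule k V) (a : ℤ) : Submodule k (Module.End k V) where
  carrier := {X | ∀ n : ℤ, ∀ v ∈ Vdec n, X v ∈ Vdec (n + a)}
  add_mem' := by
    intro X Y hX hY n v hv
    simpa using (Vdec (n + a)).add_mem (hX n v hv) (hY n v hv)
  zero_mem' := by
    intro n v _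
    simpa using (Vdec (n + a)).zero_mem
  smul_mem' := by
    intro c X hX n v hv
    simpa using (Vdec (n + a)).smul_mem c (hX n v hv)

/-- The exponential of a nilpotent endomorphism of a finite-dimensional space in
characteristic zero, written as the (finite) sum `Σ_{j ≤ dim V} X^j / j!`. -/
noncomputable def expEnd {k V : Type*} [Field k] [AddCommGroup V] [Module k V]
    [FiniteDimensional k V] (X : Module.End k V) : Module.End k V :=
  ∑ j ∈ Finset.range (Module.finrank k V + 1), ((j.factorial : k))⁻¹ • X ^ j

/-!
Let `F_a ⊆ End V` consist of the endomorphisms sending `V_{≤ m} = ⨁_{b ≤ m} V_b` into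
`V_{≤ m + a}` for every `m`. This is a multiplicative filtration with `𝔭_a ⊆ F_a`,
`𝔭_a ∩ F_{a-1} = 0`, and `F_a = 0` for `a ≪ 0`. Since `Γ ∈ F_{-1}`, both `e^{±Γ} - 1` lie in
`F_{-1}`, so `e^{-Γ} N e^{Γ} - N ∈ 𝔭_{-1} ∩ F_{-2} = 0`; hence `N` commutes with `e^{Γ}`.
Then `[N, Γ] = -∑_{j ≥ 2} [N, Γ^j] / j!`, and if `[N, Γ] ∈ F_m` the right-hand side lies in
`F_{m-1}`. So `[N, Γ]` lies in every `F_m`, hence vanishes.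
-/

open Finset Module

section WeightFiltration

variable {k V : Type*} [Field k] [AddCommGroup V] [Module k V] (Vdec : ℤ → Submodule k V)

def weightLE (m : ℤ) : Submodule k V := ⨆ b ∈ Set.Iic m, Vdec b

def weightFiltration (a : ℤ) : Submodule k (Module.End k V) where
  carrier := {X | ∀ m, ∀ v ∈ weightLE Vdec m, X v ∈ weightLE Vdec (m + a)}
  add_mem' hX hY m v hv := add_mem (hX m v hv) (hY m v hv)
  zero_mem' _ _ _ := zero_mem _
  smul_mem' c _ hX m v hv := Submodule.smul_mem _ c (hX m v hv)

variable {Vdec}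

lemma le_weightLE {n m : ℤ} (h : n ≤ m) : Vdec n ≤ weightLE Vdec m :=
  le_biSup Vdec h

lemma weightLE_mono : Monotone (weightLE Vdec) :=
  fun _ _ h => biSup_mono fun _ hb => le_trans hb h

lemma weightFiltration_mono : Monotone (weightFiltration Vdec) :=
  fun _ _ h _ hX m v hv => weightLE_mono (by omega) (hX m v hv)

lemma one_mem_weightFiltration_zero : (1 : Module.End k V) ∈ weightFiltration Vdec 0 :=
  fun m v hv => by simpa using hv

lemma mul_mem_weightFiltration {X Y : Module.End k V} {a b : ℤ}
    (hX : X ∈ weightFiltration Vdec a) (hY : Y ∈ weightFiltration Vdec b) :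
    X * Y ∈ weightFiltration Vdec (a + b) := by
  intro m v hv
  have h := hX (m + b) _ (hY m v hv)
  rwa [add_assoc, add_comm b] at h

lemma pow_mem_weightFiltration {X : Module.End k V} {a : ℤ} (hX : X ∈ weightFiltration Vdec a)
    (j : ℕ) : X ^ j ∈ weightFiltration Vdec (j * a) := by
  induction j with
  | zero => simpa using one_mem_weightFiltration_zero
  | succ j ih =>
    rw [pow_succ, Nat.cast_succ, add_one_mul]
    exact mul_mem_weightFiltration ih hX

lemma weightPart_le_weightFiltration {a a' : ℤ} (h : a ≤ a') :
    weightPart Vdec a ≤ weightFiltration Vdec a' := by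
  intro X hX m v hv
  suffices weightLE Vdec m ≤ (weightLE Vdec (m + a')).comap X from this hv
  exact iSup₂_le fun b hb w hw => le_weightLE (by rw [Set.mem_Iic] at hb; omega) (hX b w hw)

lemma biSup_weightPart_le_weightFiltration (c : ℤ) :
    ⨆ a ∈ Set.Iic c, weightPart Vdec a ≤ weightFiltration Vdec c :=
  iSup₂_le fun _ ha => weightPart_le_weightFiltration ha

lemma eq_zero_of_forall_le_ker (htop : iSup Vdec = ⊤) {X : Module.End k V}
    (h : ∀ n, Vdec n ≤ LinearMap.ker X) : X = 0 := by
  rw [← LinearMap.ker_eq_top, eq_top_iff, ← htop]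
  exact iSup_le h

lemma eq_zero_of_mem_weightPart_of_mem_weightFiltration (hinternal : DirectSum.IsInternal Vdec)
    {a : ℤ} {X : Module.End k V} (hX : X ∈ weightPart Vdec a)
    (hX' : X ∈ weightFiltration Vdec (a - 1)) : X = 0 := by
  refine eq_zero_of_forall_le_ker hinternal.submodule_iSup_eq_top fun n v hv => ?_
  have hdisj : Disjoint (Vdec (n + a)) (weightLE Vdec (n + a - 1)) :=
    hinternal.submodule_iSupIndep.disjoint_biSup (by simp)
  have hXv : X v ∈ weightLE Vdec (n + a - 1) := by
    simpa only [add_sub_assoc] using hX' n v (le_weightLE le_rfl hv)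
  exact Submodule.disjoint_def.mp hdisj _ (hX n v hv) hXv

lemma exists_weightFiltration_eq_bot (htop : iSup Vdec = ⊤)
    (hfin : {n : ℤ | Vdec n ≠ ⊥}.Finite) :
    ∃ a₀, ∀ a ≤ a₀, weightFiltration Vdec a = ⊥ := by
  obtain ⟨lo, hlo⟩ := hfin.bddBelow
  obtain ⟨hi, hhi⟩ := hfin.bddAbove
  refine ⟨lo - hi - 1, fun a ha => (Submodule.eq_bot_iff _).2 fun X hX =>
    eq_zero_of_forall_le_ker htop fun n => ?_⟩
  by_cases hn : Vdec n = ⊥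
  · simp [hn]
  have hlow : weightLE Vdec (n + a) = ⊥ := by
    refine le_bot_iff.mp (iSup₂_le fun b hb => le_bot_iff.mpr (not_not.mp fun hb' => ?_))
    have := hlo hb'
    have := hhi hn
    rw [Set.mem_Iic] at hb
    omega
  intro v hv
  simpa [hlow] using hX n v (le_weightLE le_rfl hv)

lemma isNilpotent_of_mem_weightFiltration (htop : iSup Vdec = ⊤)
    (hfin : {n : ℤ | Vdec n ≠ ⊥}.Finite) {X : Module.End k V} {a : ℤ} (ha : a < 0)
    (hX : X ∈ weightFiltration Vdec a) : IsNilpotent X := by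
  obtain ⟨a₀, ha₀⟩ := exists_weightFiltration_eq_bot htop hfin
  refine ⟨(-a₀).toNat, ?_⟩
  have h := pow_mem_weightFiltration hX (-a₀).toNat
  rwa [ha₀ _ (by nlinarith [Int.self_le_toNat (-a₀)]), Submodule.mem_bot] at h

lemma mul_mul_sub_mem_weightFiltration {A B N : Module.End k V} {a : ℤ}
    (hA : A - 1 ∈ weightFiltration Vdec (-1)) (hB : B - 1 ∈ weightFiltration Vdec (-1))
    (hN : N ∈ weightFiltration Vdec a) : A * N * B - N ∈ weightFiltration Vdec (a - 1) := by
  have hAN : (A - 1) * N ∈ weightFiltration Vdec (a - 1) := by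
    simpa [neg_add_eq_sub] using mul_mem_weightFiltration hA hN
  have hNB : N * (B - 1) ∈ weightFiltration Vdec (a - 1) := by
    simpa [← sub_eq_add_neg] using mul_mem_weightFiltration hN hB
  have hANB : (A - 1) * N * (B - 1) ∈ weightFiltration Vdec (a - 1) :=
    weightFiltration_mono (by omega) (mul_mem_weightFiltration hAN hB)
  have h : A * N * B - N = (A - 1) * N + N * (B - 1) + (A - 1) * N * (B - 1) := by noncomm_ring
  rw [h]
  exact add_mem (add_mem hAN hNB) hANB

lemma commutator_pow_mem_weightFiltration {N Γ : Module.End k V} {m : ℤ}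
    (hΓ : Γ ∈ weightFiltration Vdec (-1)) (hC : N * Γ - Γ * N ∈ weightFiltration Vdec m)
    (j : ℕ) : N * Γ ^ (j + 1) - Γ ^ (j + 1) * N ∈ weightFiltration Vdec (m - j) := by
  induction j with
  | zero => simpa using hC
  | succ j ih =>
    have h : N * Γ ^ (j + 2) - Γ ^ (j + 2) * N
        = (N * Γ ^ (j + 1) - Γ ^ (j + 1) * N) * Γ + Γ ^ (j + 1) * (N * Γ - Γ * N) := by
      rw [pow_succ _ (j + 1)]
      noncomm_ring
    have h₁ := mul_mem_weightFiltration ih hΓ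
    have h₂ := mul_mem_weightFiltration (pow_mem_weightFiltration hΓ (j + 1)) hC
    rw [h]
    exact add_mem (by convert h₁ using 2; push_cast; ring)
      (by convert h₂ using 2; push_cast; ring)

end WeightFiltration

section Exponential

variable {k V : Type*} [Field k] [AddCommGroup V] [Module k V] [FiniteDimensional k V]
  {Vdec : ℤ → Submodule k V}

lemma pow_finrank_eq_zero_of_isNilpotent {X : Module.End k V} (hX : IsNilpotent X) :
    X ^ finrank k V = 0 := by
  simpa [hX.charpoly_eq_X_pow_finrank] using X.aeval_self_charpoly

lemma expEnd_eq_one_add_add_sum [Nontrivial V] (X : Module.End k V) :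
    expEnd X = 1 + X +
      ∑ i ∈ range (finrank k V - 1), (((i + 2).factorial : k))⁻¹ • X ^ (i + 2) := by
  obtain ⟨R, hR⟩ := Nat.exists_eq_add_one.mpr (finrank_pos (R := k) (M := V))
  rw [expEnd, hR, sum_range_succ', sum_range_succ']
  simp only [Nat.add_sub_cancel, Nat.factorial_zero, Nat.factorial_one, Nat.cast_one, inv_one,
    one_smul, pow_zero, zero_add, pow_one]
  abel

lemma expEnd_sub_one_mem_weightFiltration {X : Module.End k V}
    (hX : X ∈ weightFiltration Vdec (-1)) : expEnd X - 1 ∈ weightFiltration Vdec (-1) := by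
  rw [expEnd, sum_range_succ']
  simp only [Nat.factorial_zero, Nat.cast_one, inv_one, pow_zero, one_smul, add_sub_cancel_right]
  refine Submodule.sum_mem _ fun i _ => Submodule.smul_mem _ _ ?_
  exact weightFiltration_mono (by push_cast; omega) (pow_mem_weightFiltration hX (i + 1))

lemma commutator_mem_weightFiltration_sub_one {N Γ : Module.End k V} {m : ℤ}
    (hΓ : Γ ∈ weightFiltration Vdec (-1)) (hcomm : Commute N (expEnd Γ))
    (hC : N * Γ - Γ * N ∈ weightFiltration Vdec m) :
    N * Γ - Γ * N ∈ weightFiltration Vdec (m - 1) := by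
  rcases subsingleton_or_nontrivial V with hV | hV
  · simp [Subsingleton.elim (N * Γ - Γ * N) 0]
  have hexpand : N * expEnd Γ - expEnd Γ * N = (N * Γ - Γ * N) +
      ∑ i ∈ range (finrank k V - 1),
        (((i + 2).factorial : k))⁻¹ • (N * Γ ^ (i + 2) - Γ ^ (i + 2) * N) := by
    simp only [expEnd_eq_one_add_add_sum, mul_add, add_mul, mul_one, one_mul, mul_sum, sum_mul,
      mul_smul_comm, smul_mul_assoc, smul_sub, sum_sub_distrib]
    abel
  rw [sub_eq_zero.mpr hcomm.eq, eq_comm, add_eq_zero_iff_eq_neg] at hexpand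
  rw [hexpand]
  refine neg_mem (Submodule.sum_mem _ fun i _ => Submodule.smul_mem _ _ ?_)
  exact weightFiltration_mono (by push_cast; omega)
    (commutator_pow_mem_weightFiltration hΓ hC (i + 1))

lemma commute_of_commute_expEnd (htop : iSup Vdec = ⊤) (hfin : {n : ℤ | Vdec n ≠ ⊥}.Finite)
    {N Γ : Module.End k V} {b : ℤ} (hN : N ∈ weightFiltration Vdec b)
    (hΓ : Γ ∈ weightFiltration Vdec (-1)) (hcomm : Commute N (expEnd Γ)) : Commute N Γ := by
  have hC : N * Γ - Γ * N ∈ weightFiltration Vdec (b - 1) := by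
    refine sub_mem ?_ ?_
    · simpa [← sub_eq_add_neg] using mul_mem_weightFiltration hN hΓ
    · simpa [neg_add_eq_sub] using mul_mem_weightFiltration hΓ hN
  have hdeep : ∀ t : ℕ, N * Γ - Γ * N ∈ weightFiltration Vdec (b - 1 - t) := by
    intro t
    induction t with
    | zero => simpa using hC
    | succ t ih =>
      convert commutator_mem_weightFiltration_sub_one hΓ hcomm ih using 2
      push_cast
      ring
  obtain ⟨a₀, ha₀⟩ := exists_weightFiltration_eq_bot htop hfin
  have h := hdeep (b - 1 - a₀).toNat
  rwa [ha₀ _ (by omega), Submodule.mem_bot, sub_eq_zero] at h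

variable [CharZero k]

lemma expEnd_mul_expEnd_neg {X : Module.End k V} (hX : IsNilpotent X) :
    expEnd X * expEnd (-X) = 1 := by
  -- `IsNilpotent.exp` is defined for `ℚ`-algebras; the `ℚ`-action here is the one through `k`.
  let : Module ℚ (Module.End k V) := Module.compHom _ (algebraMap ℚ k)
  have hexp : ∀ Y : Module.End k V, IsNilpotent Y → expEnd Y = IsNilpotent.exp Y := by
    intro Y hY
    rw [IsNilpotent.exp_eq_sum (pow_eq_zero_of_le (Nat.le_succ _)
      (pow_finrank_eq_zero_of_isNilpotent hY)), expEnd]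
    refine sum_congr rfl fun j _ => ?_
    change _ = algebraMap ℚ k (j.factorial : ℚ)⁻¹ • Y ^ j
    rw [map_inv₀, map_natCast]
  rw [hexp X hX, hexp (-X) hX.neg, IsNilpotent.exp_mul_exp_neg_self hX]

end Exponential

/-- if `N ∈ 𝔭₋₁` and `Γ ∈ ⊕_{a ≤ -1} 𝔭_a` satisfy
`e^{-Γ} N e^{Γ} ∈ 𝔭₋₁`, then `[Γ, N] = 0`; equivalently `e^{-Γ} N e^{Γ} = N`. -/
theorem zero_loci_stmt2 {k V : Type*} [Field k] [CharZero k] [AddCommGroup V] [Module k V]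
    [FiniteDimensional k V]
    (Vdec : ℤ → Submodule k V) (hinternal : DirectSum.IsInternal Vdec)
    (hfin : {n : ℤ | Vdec n ≠ ⊥}.Finite)
    (N Γ : Module.End k V)
    (hN : N ∈ weightPart Vdec (-1))
    (hΓ : Γ ∈ ⨆ a ∈ Set.Iic (-1 : ℤ), weightPart Vdec a)
    (hconj : expEnd (-Γ) * N * expEnd Γ ∈ weightPart Vdec (-1)) :
    Γ * N - N * Γ = 0 ∧ expEnd (-Γ) * N * expEnd Γ = N := by
  have htop := hinternal.submodule_iSup_eq_top
  have hN' : N ∈ weightFiltration Vdec (-1) := weightPart_le_weightFiltration le_rfl hN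
  have hΓ' : Γ ∈ weightFiltration Vdec (-1) := biSup_weightPart_le_weightFiltration _ hΓ
  have hfix : expEnd (-Γ) * N * expEnd Γ = N := by
    refine sub_eq_zero.mp (eq_zero_of_mem_weightPart_of_mem_weightFiltration hinternal
      (sub_mem hconj hN) ?_)
    exact mul_mul_sub_mem_weightFiltration (expEnd_sub_one_mem_weightFiltration (neg_mem hΓ'))
      (expEnd_sub_one_mem_weightFiltration hΓ') hN'
  have hcomm : Commute N (expEnd Γ) := by
    have hnil := isNilpotent_of_mem_weightFiltration htop hfin (by norm_num) hΓ'
    calc N * expEnd Γ = expEnd Γ * (expEnd (-Γ) * N * expEnd Γ) := by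
          rw [← mul_assoc, ← mul_assoc, expEnd_mul_expEnd_neg hnil, one_mul]
      _ = expEnd Γ * N := by rw [hfix]
  exact ⟨sub_eq_zero.mpr (commute_of_commute_expEnd htop hfin hN' hΓ' hcomm).symm.eq, hfix⟩
end

section
/- Let V be a finite-dimensional vector space over a field k of characteristic zero, W a finite increasing filtration of V, N a nilpotent endomorphism with N(W_i) ⊆ W_i for all i, and Y_M a grading of a finite increasing filtration M with Y_M(W_i) ⊆ W_i and [Y_M, N] = −2N. Let Y be a grading of W with [Y, Y_M] = 0 such that, writing N = N_0 + N_{−1} + N_{−2} + ⋯ with [Y, N_{−j}] = −j N_{−j}, the pair (N_0, H = Y_M − Y) is an sl2-pair with associated sl2-triple (N_0, H, N_0^+) and [N − N_0, N_0^+] = 0. Then for every k ≥ 1 one has [N_0^+, N_{−k}] = 0 and [H, N_{−k}] = (k−2) N_{−k}; that is, N_{−k} is either zero or a highest weight vector of weight k−2 for the adjoint action of the sl2-triple. In particular N_{−1} = 0. -/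
/-- A finite increasing filtration of `V` indexed by `ℤ`. -/
def FinIncrFil {k V : Type*} [Field k] [AddCommGroup V] [Module k V]
    (L : ℤ → Submodule k V) : Prop :=
  Monotone L ∧ (∃ a : ℤ, L a = ⊥) ∧ (∃ b : ℤ, L b = ⊤)

/-- A grading of an increasing filtration `L`: a semisimple endomorphism with integer
eigenvalues such that `L i = E_i(Y) ⊕ L (i-1)` for all `i`. -/
def IsGrading {k V : Type*} [Field k] [AddCommGroup V] [Module k V]
    (L : ℤ → Submodule k V) (Y : Module.End k V) : Prop :=
  (⨆ i : ℤ, Y.eigenspace (i : k)) = ⊤ ∧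
    ∀ i : ℤ, L i = Y.eigenspace (i : k) ⊔ L (i - 1) ∧
      Disjoint (Y.eigenspace (i : k)) (L (i - 1))

/-! Split `N` into the `ad Y`-eigencomponents `C j` (eigenvalue `-j`). Since `Y` and `Y_M`
commute, `ad Y_M` preserves this splitting, so `[Y_M, N] = -2N` forces `[Y_M, C j] = -2 C j`,
hence `[H, C j] = (j - 2) C j` for `H = Y_M - Y`. Then `[N⁺, C j]` lies in the `ad H`-eigenspace of
eigenvalue `j`; these are distinct for `j ≥ 1` and sum to `[N⁺, N - C 0] = 0`, so each vanishes.
Thus `C 1` is a primitive vector of weight `-1` for the `sl₂`-triple `(H, N⁺, C 0)` acting on the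
finite-dimensional `End V`, where weights of nonzero primitive vectors are natural numbers. -/

open Module Finset LieModule

lemma Module.End.eq_zero_of_sum_eq_zero_of_mem_eigenspace {R M ι : Type*} [CommRing R]
    [IsDomain R] [AddCommGroup M] [Module R M] [IsTorsionFree R M] (f : End R M) {μ : ι → R}
    (hμ : Function.Injective μ) {s : Finset ι} {v : ι → M}
    (hv : ∀ i ∈ s, v i ∈ f.eigenspace (μ i)) (hsum : ∑ i ∈ s, v i = 0) :
    ∀ i ∈ s, v i = 0 :=
  (iSupIndep_iff_finsetSum_eq_zero_imp_eq_zero _).mp (f.eigenspaces_iSupIndep.comp hμ)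
    s v hv hsum

section LieAlgebra

variable {R L ι : Type*} [CommRing R] [IsDomain R] [LieRing L] [LieAlgebra R L]
  [IsTorsionFree R L] {c : ι → L} {μ : ι → R} {s : Finset ι}

lemma lie_eq_smul_of_lie_sum_eq_smul {x y : L} {a : R} (hμ : Function.Injective μ)
    (hyx : ⁅y, x⁆ = 0) (hc : ∀ i ∈ s, ⁅y, c i⁆ = μ i • c i)
    (hx : ⁅x, ∑ i ∈ s, c i⁆ = a • ∑ i ∈ s, c i) : ∀ i ∈ s, ⁅x, c i⁆ = a • c i := by
  intro i hi
  rw [← sub_eq_zero]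
  refine (LieAlgebra.ad R L y).eq_zero_of_sum_eq_zero_of_mem_eigenspace hμ
    (v := fun i ↦ ⁅x, c i⁆ - a • c i) (fun j hj ↦ ?_) ?_ i hi
  · rw [End.mem_eigenspace_iff, LieAlgebra.ad_apply, lie_sub, leibniz_lie, hyx, zero_lie,
      zero_add, lie_smul, hc j hj, lie_smul, smul_comm a]
    module
  · rw [sum_sub_distrib, ← lie_sum, ← smul_sum, hx, sub_self]

lemma lie_eq_zero_of_lie_sum_eq_zero {h e : L} {a : R} (hμ : Function.Injective μ)
    (he : ⁅h, e⁆ = a • e) (hc : ∀ i ∈ s, ⁅h, c i⁆ = μ i • c i)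
    (hsum : ⁅e, ∑ i ∈ s, c i⁆ = 0) : ∀ i ∈ s, ⁅e, c i⁆ = 0 := by
  refine (LieAlgebra.ad R L h).eq_zero_of_sum_eq_zero_of_mem_eigenspace
    ((add_right_injective a).comp hμ) (v := fun i ↦ ⁅e, c i⁆) (fun j hj ↦ ?_) ?_
  · rw [End.mem_eigenspace_iff, LieAlgebra.ad_apply, leibniz_lie, he, hc j hj, smul_lie,
      lie_smul, Function.comp_apply, add_smul]
  · rw [← lie_sum, hsum]

end LieAlgebra

lemma primitive_vector_eq_zero_of_weight_ne_natCast {R L M : Type*} [CommRing R] [IsDomain R]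
    [CharZero R] [LieRing L] [LieAlgebra R L] [AddCommGroup M] [Module R M] [LieRingModule L M]
    [LieModule R L M] [IsNoetherian R M] [IsTorsionFree R M] {h e f : L}
    (hef : ⁅e, f⁆ = h) (hhe : ⁅h, e⁆ = 2 • e) (hhf : ⁅h, f⁆ = -(2 • f)) {m : M} {μ : R}
    (hμ : ∀ n : ℕ, μ ≠ n) (hem : ⁅e, m⁆ = 0) (hhm : ⁅h, m⁆ = μ • m) : m = 0 := by
  by_contra hm
  obtain rfl | hh := eq_or_ne h 0
  · rw [zero_lie, eq_comm, smul_eq_zero_iff_left hm] at hhm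
    exact hμ 0 (by simpa using hhm)
  · have t : IsSl2Triple h e f := ⟨hh, hef, hhe, hhf⟩
    obtain ⟨n, hn⟩ := (⟨hm, hhm, hem⟩ : t.HasPrimitiveVectorWith m μ).exists_nat
    exact hμ n hn

theorem zero_loci_stmt4_general {k V : Type*} [Field k] [CharZero k] [AddCommGroup V] [Module k V]
    [FiniteDimensional k V]
    (N : Module.End k V)
    (Y_M : Module.End k V)
    (hYMN : Y_M * N - N * Y_M = (-2 : k) • N)
    (Y : Module.End k V) (hYYM : Y * Y_M = Y_M * Y)
    (n : ℕ) (C : ℕ → Module.End k V) (Nplus : Module.End k V)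
    (hdec : N = ∑ j ∈ Finset.range n, C j) (hvan : ∀ j : ℕ, n ≤ j → C j = 0)
    (heig : ∀ j : ℕ, Y * C j - C j * Y = (-(j : k)) • C j)
    (hsl2 : (Y_M - Y) * Nplus - Nplus * (Y_M - Y) = (2 : k) • Nplus)
    (hsl3 : Nplus * C 0 - C 0 * Nplus = Y_M - Y)
    (hb : (N - C 0) * Nplus - Nplus * (N - C 0) = 0) :
    (∀ j : ℕ, 1 ≤ j →
      Nplus * C j - C j * Nplus = 0 ∧
      (Y_M - Y) * C j - C j * (Y_M - Y) = (((j : ℤ) - 2 : ℤ) : k) • C j) ∧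
    C 1 = 0 := by
  let _ : LieRing (Module.End k V) := LieRing.ofAssociativeRing
  simp only [← LieRing.of_associative_ring_bracket] at *
  have hYYM' : ⁅Y, Y_M⁆ = 0 := by rw [LieRing.of_associative_ring_bracket, hYYM, sub_self]
  have hYMC : ∀ j ∈ range n, ⁅Y_M, C j⁆ = (-2 : k) • C j :=
    lie_eq_smul_of_lie_sum_eq_smul (neg_injective.comp Nat.cast_injective) hYYM'
      (fun j _ ↦ heig j) (hdec ▸ hYMN)
  have hHC (j : ℕ) : ⁅Y_M - Y, C j⁆ = ((j : k) - 2) • C j := by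
    obtain hj | hj := lt_or_ge j n
    · rw [sub_lie, hYMC j (mem_range.mpr hj), heig]
      module
    · simp [hvan j hj]
  have hNC (j : ℕ) (hj : 1 ≤ j) : ⁅Nplus, C j⁆ = 0 := by
    obtain hjn | hjn := lt_or_ge j n
    · have h0 : 0 ∈ range n := mem_range.mpr (by omega)
      refine lie_eq_zero_of_lie_sum_eq_zero (s := (range n).erase 0)
        (sub_left_injective.comp Nat.cast_injective) hsl2 (fun i _ ↦ hHC i) ?_ j
        (mem_erase.mpr ⟨by omega, mem_range.mpr hjn⟩)
      rw [sum_erase_eq_sub h0, ← hdec, ← lie_skew, hb, neg_zero]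
    · simp [hvan j hjn]
  refine ⟨fun j hj ↦ ⟨hNC j hj, by rw [hHC]; push_cast; rfl⟩, ?_⟩
  exact primitive_vector_eq_zero_of_weight_ne_natCast hsl3 (by rw [hsl2, two_smul, two_smul])
    (by rw [hHC 0]; module) (μ := (-1 : k)) (fun n ↦ by norm_cast)
    (hNC 1 le_rfl) (by rw [hHC 1]; norm_num)

/-- in the setting of Deligne's lemma, for every `k ≥ 1` the component
`N₋ₖ` satisfies `[N₀⁺, N₋ₖ] = 0` and `[H, N₋ₖ] = (k-2) N₋ₖ`, i.e. it is zero or a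
highest weight vector of weight `k-2` for the `sl₂`-triple `(N₀, H, N₀⁺)`.
In particular `N₋₁ = 0`. -/
theorem zero_loci_stmt4 {k V : Type*} [Field k] [CharZero k] [AddCommGroup V] [Module k V]
    [FiniteDimensional k V]
    (W M : ℤ → Submodule k V) (hW : FinIncrFil W) (hMfil : FinIncrFil M)
    (N : Module.End k V) (hnil : IsNilpotent N) (hNW : ∀ i : ℤ, ∀ v ∈ W i, N v ∈ W i)
    (Y_M : Module.End k V) (hYM : IsGrading M Y_M)
    (hYMW : ∀ i : ℤ, ∀ v ∈ W i, Y_M v ∈ W i)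
    (hYMN : Y_M * N - N * Y_M = (-2 : k) • N)
    (Y : Module.End k V) (hY : IsGrading W Y) (hYYM : Y * Y_M = Y_M * Y)
    (n : ℕ) (C : ℕ → Module.End k V) (Nplus : Module.End k V)
    (hdec : N = ∑ j ∈ Finset.range n, C j) (hvan : ∀ j : ℕ, n ≤ j → C j = 0)
    (heig : ∀ j : ℕ, Y * C j - C j * Y = (-(j : k)) • C j)
    (hsl1 : (Y_M - Y) * C 0 - C 0 * (Y_M - Y) = (-2 : k) • C 0)
    (hsl2 : (Y_M - Y) * Nplus - Nplus * (Y_M - Y) = (2 : k) • Nplus)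
    (hsl3 : Nplus * C 0 - C 0 * Nplus = Y_M - Y)
    (hb : (N - C 0) * Nplus - Nplus * (N - C 0) = 0) :
    (∀ j : ℕ, 1 ≤ j →
      Nplus * C j - C j * Nplus = 0 ∧
      (Y_M - Y) * C j - C j * (Y_M - Y) = (((j : ℤ) - 2 : ℤ) : k) • C j) ∧
    C 1 = 0 :=
  zero_loci_stmt4_general N Y_M hYMN Y hYYM n C Nplus hdec hvan heig hsl2 hsl3 hb
end

section
/- Let V be a finite-dimensional vector space over a field k of characteristic zero, and let W be a finite increasing filtration of V with W_{i−1} = 0 and W_{i+1} = V for some i ∈ ℤ (so W has at most two nonzero graded quotients, in adjacent weights i and i+1). Let N be a nilpotent endomorphism with N(W_j) ⊆ W_j for all j, assume the relative weight filtration M = M(N,W) exists, and let Y_M be a grading of M with Y_M(W_j) ⊆ W_j for all j and [Y_M, N] = −2N. Let Y = Y(N,Y_M) be the unique grading of W with [Y,Y_M] = 0 satisfying Deligne's conditions (a) and (b). Then N = N_0, the ad(Y)-weight-zero component of N; in particular [Y, N] = 0. -/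
/-- `M` is the relative weight filtration of `N` and `W` (elementwise form of the
`Gr^M Gr^W` isomorphism conditions). -/
def IsRelWeightFil {k V : Type*} [Field k] [AddCommGroup V] [Module k V]
    (W M : ℤ → Submodule k V) (N : Module.End k V) : Prop :=
  FinIncrFil M ∧ (∀ i : ℤ, ∀ v ∈ M i, N v ∈ M (i - 2)) ∧
    ∀ (j : ℤ) (m : ℕ), 1 ≤ m →
      (∀ v ∈ M (j - m) ⊓ W j, ∃ u ∈ M (j + m) ⊓ W j,
        (N ^ m) u - v ∈ (M (j - m - 1) ⊓ W j) ⊔ W (j - 1)) ∧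
      (∀ u ∈ M (j + m) ⊓ W j,
        (N ^ m) u ∈ (M (j - m - 1) ⊓ W j) ⊔ W (j - 1) →
        u ∈ (M (j + m - 1) ⊓ W j) ⊔ W (j - 1))

open Module Finset

theorem Finset.sum_range_eq_of_forall_le_eq_zero {M : Type*} [AddCommMonoid M] {f : ℕ → M}
    {n m : ℕ} (hn : ∀ j, n ≤ j → f j = 0) (hm : ∀ j, m ≤ j → f j = 0) :
    ∑ j ∈ range n, f j = ∑ j ∈ range m, f j :=
  calc ∑ j ∈ range n, f j = ∑ j ∈ range (n + m), f j :=
        sum_subset (range_subset_range.2 (by omega)) fun j _ hj => hn j (by simpa using hj)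
    _ = ∑ j ∈ range m, f j :=
        (sum_subset (range_subset_range.2 (by omega)) fun j _ hj => hm j (by simpa using hj)).symm

theorem Module.End.apply_mem_eigenspace_add {k V : Type*} [Field k] [AddCommGroup V] [Module k V]
    {Y C : End k V} {c μ : k} (hC : Y * C - C * Y = c • C) {v : V} (hv : v ∈ Y.eigenspace μ) :
    C v ∈ Y.eigenspace (μ + c) := by
  rw [End.mem_eigenspace_iff] at hv ⊢
  have hYCv := LinearMap.congr_fun hC v
  simp only [LinearMap.sub_apply, End.mul_apply, LinearMap.smul_apply, hv, map_smul] at hYCv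
  rw [add_smul, ← hYCv]
  abel

namespace IsGrading

variable {k V : Type*} [Field k] [AddCommGroup V] [Module k V] {L : ℤ → Submodule k V}
  {Y : End k V}

theorem eigenspace_le (hY : IsGrading L Y) (m : ℤ) : Y.eigenspace (m : k) ≤ L m :=
  (hY.2 m).1 ▸ le_sup_left

theorem eigenspace_eq_bot_of_eq_top (hY : IsGrading L Y) {m : ℤ} (hm : L (m - 1) = ⊤) :
    Y.eigenspace (m : k) = ⊥ :=
  disjoint_top.mp (hm ▸ (hY.2 m).2)

theorem eq_zero_of_forall_eigenspace (hY : IsGrading L Y) {A : End k V}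
    (hA : ∀ m : ℤ, ∀ v ∈ Y.eigenspace (m : k), A v = 0) : A = 0 := by
  ext v
  exact Submodule.iSup_induction _ (motive := fun v => A v = 0) (hY.1 ▸ Submodule.mem_top)
    hA (map_zero A) fun x y hx hy => by rw [map_add, hx, hy, add_zero]

section TwoStep

variable {i : ℤ} (hY : IsGrading L Y) (hL : Monotone L) (hbot : L (i - 1) = ⊥)
  (htop : L (i + 1) = ⊤)
include hY hL hbot htop

theorem eigenspace_eq_bot_of_ne {m : ℤ} (hi : m ≠ i) (hi' : m ≠ i + 1) :
    Y.eigenspace (m : k) = ⊥ := by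
  rcases (by omega : m ≤ i - 1 ∨ i + 2 ≤ m) with hm | hm
  · exact le_bot_iff.mp ((hY.eigenspace_le m).trans (hbot ▸ hL hm))
  · exact hY.eigenspace_eq_bot_of_eq_top (top_unique (htop ▸ hL (by omega)))

theorem eq_zero_of_commutator_eq_neg_smul {C : End k V} {j : ℕ}
    (hC : Y * C - C * Y = (-(j : k)) • C) (hj : 2 ≤ j) : C = 0 := by
  refine hY.eq_zero_of_forall_eigenspace fun m v hv => ?_
  have hCv := End.apply_mem_eigenspace_add hC hv
  rw [← sub_eq_add_neg, show (m : k) - j = ((m - j : ℤ) : k) by push_cast; ring] at hCv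
  by_cases hm : m = i ∨ m = i + 1
  · rwa [hY.eigenspace_eq_bot_of_ne hL hbot htop (m := m - j) (by omega) (by omega),
      Submodule.mem_bot] at hCv
  · rw [hY.eigenspace_eq_bot_of_ne hL hbot htop (by omega) (by omega), Submodule.mem_bot] at hv
    rw [hv, map_zero]

end TwoStep

end IsGrading

theorem LieModule.exists_nat_eq_of_lie_e_eq_zero {R L M : Type*} [CommRing R] [IsDomain R]
    [CharZero R] [LieRing L] [LieAlgebra R L] [AddCommGroup M] [Module R M] [LieRingModule L M]
    [LieModule R L M] [IsNoetherian R M] [IsTorsionFree R M] {h e f : L}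
    (hef : ⁅e, f⁆ = h) (hhe : ⁅h, e⁆ = 2 • e) (hhf : ⁅h, f⁆ = -(2 • f))
    {m : M} (hm : m ≠ 0) {μ : R} (hhm : ⁅h, m⁆ = μ • m) (hem : ⁅e, m⁆ = 0) :
    ∃ n : ℕ, μ = n := by
  rcases eq_or_ne h 0 with rfl | hh
  · refine ⟨0, ?_⟩
    rw [Nat.cast_zero]
    exact (smul_eq_zero.mp (by rw [← hhm, zero_lie])).resolve_right hm
  · exact IsSl2Triple.HasPrimitiveVectorWith.exists_nat (t := ⟨hh, hef, hhe, hhf⟩) ⟨hm, hhm, hem⟩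

section AssociativeLie

attribute [local instance 100] LieRing.ofAssociativeRing LieAlgebra.ofAssociativeAlgebra

theorem Module.End.eq_zero_of_commutator_eq_zero_of_weight_ne_natCast {k V : Type*} [Field k]
    [CharZero k] [AddCommGroup V] [Module k V] [FiniteDimensional k V] {H E F X : End k V} {μ : k}
    (hEF : E * F - F * E = H) (hHE : H * E - E * H = (2 : k) • E)
    (hHF : H * F - F * H = (-2 : k) • F) (hμ : ∀ n : ℕ, μ ≠ n)
    (hHX : H * X - X * H = μ • X) (hEX : E * X - X * E = 0) : X = 0 := by
  by_contra hX
  obtain ⟨n, hn⟩ := LieModule.exists_nat_eq_of_lie_e_eq_zero (R := k) (L := End k V)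
    (h := H) (e := E) (f := F) (m := X) (by rwa [Ring.lie_def]) (by rw [Ring.lie_def, hHE]; module)
    (by rw [Ring.lie_def, hHF]; module) hX (by rwa [Ring.lie_def]) (by rwa [Ring.lie_def])
  exact hμ n hn

end AssociativeLie

theorem zero_loci_stmt5_general {k V : Type*} [Field k] [CharZero k] [AddCommGroup V] [Module k V]
    [FiniteDimensional k V]
    (W : ℤ → Submodule k V) (hW : FinIncrFil W)
    (i : ℤ) (hWbot : W (i - 1) = ⊥) (hWtop : W (i + 1) = ⊤)
    (N : Module.End k V)
    (Y_M : Module.End k V)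
    (hYMN : Y_M * N - N * Y_M = (-2 : k) • N)
    (Y : Module.End k V) (hY : IsGrading W Y)
    (n : ℕ) (C : ℕ → Module.End k V) (Nplus : Module.End k V)
    (hdec : N = ∑ j ∈ Finset.range n, C j) (hvan : ∀ j : ℕ, n ≤ j → C j = 0)
    (heig : ∀ j : ℕ, Y * C j - C j * Y = (-(j : k)) • C j)
    (hsl1 : (Y_M - Y) * C 0 - C 0 * (Y_M - Y) = (-2 : k) • C 0)
    (hsl2 : (Y_M - Y) * Nplus - Nplus * (Y_M - Y) = (2 : k) • Nplus)
    (hsl3 : Nplus * C 0 - C 0 * Nplus = Y_M - Y)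
    (hb : (N - C 0) * Nplus - Nplus * (N - C 0) = 0) :
    N = C 0 ∧ Y * N = N * Y := by
  have hN : N = C 0 + C 1 := by
    rw [hdec, sum_range_eq_of_forall_le_eq_zero hvan
      fun j => hY.eq_zero_of_commutator_eq_neg_smul hW.1 hWbot hWtop (heig j)]
    simp [sum_range_succ]
  have hweight : (Y_M - Y) * C 1 - C 1 * (Y_M - Y) = (-1 : k) • C 1 := by
    rw [hN] at hYMN
    linear_combination (norm := skip) hYMN - hsl1 - heig 0 - heig 1
    simp only [Nat.cast_zero, Nat.cast_one, neg_zero, zero_smul, mul_add, add_mul, mul_sub, sub_mul]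
    module
  have hkill : Nplus * C 1 - C 1 * Nplus = 0 := by
    rw [hN, add_sub_cancel_left] at hb
    rw [← neg_sub, hb, neg_zero]
  have hC1 : C 1 = 0 :=
    End.eq_zero_of_commutator_eq_zero_of_weight_ne_natCast hsl3 hsl2 hsl1
    (fun m hm => Nat.cast_add_one_ne_zero m (by rw [← hm]; ring)) hweight hkill
  have hNC0 : N = C 0 := by rw [hN, hC1, add_zero]
  exact ⟨hNC0, by simpa [hNC0, sub_eq_zero] using heig 0⟩

/-- if `W` has at most two nonzero adjacent graded quotients
(`W (i-1) = 0`, `W (i+1) = V`), then for the Deligne grading `Y = Y(N, Y_M)`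
(given here together with its defining data) one has `N = N₀`;
in particular `[Y, N] = 0`. -/
theorem zero_loci_stmt5 {k V : Type*} [Field k] [CharZero k] [AddCommGroup V] [Module k V]
    [FiniteDimensional k V]
    (W M : ℤ → Submodule k V) (hW : FinIncrFil W)
    (i : ℤ) (hWbot : W (i - 1) = ⊥) (hWtop : W (i + 1) = ⊤)
    (N : Module.End k V) (hnil : IsNilpotent N) (hNW : ∀ j : ℤ, ∀ v ∈ W j, N v ∈ W j)
    (hM : IsRelWeightFil W M N)
    (Y_M : Module.End k V) (hYM : IsGrading M Y_M)
    (hYMW : ∀ j : ℤ, ∀ v ∈ W j, Y_M v ∈ W j)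
    (hYMN : Y_M * N - N * Y_M = (-2 : k) • N)
    (Y : Module.End k V) (hY : IsGrading W Y) (hYYM : Y * Y_M = Y_M * Y)
    (n : ℕ) (C : ℕ → Module.End k V) (Nplus : Module.End k V)
    (hdec : N = ∑ j ∈ Finset.range n, C j) (hvan : ∀ j : ℕ, n ≤ j → C j = 0)
    (heig : ∀ j : ℕ, Y * C j - C j * Y = (-(j : k)) • C j)
    (hsl1 : (Y_M - Y) * C 0 - C 0 * (Y_M - Y) = (-2 : k) • C 0)
    (hsl2 : (Y_M - Y) * Nplus - Nplus * (Y_M - Y) = (2 : k) • Nplus)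
    (hsl3 : Nplus * C 0 - C 0 * Nplus = Y_M - Y)
    (hb : (N - C 0) * Nplus - Nplus * (N - C 0) = 0) :
    N = C 0 ∧ Y * N = N * Y :=
  zero_loci_stmt5_general W hW i hWbot hWtop N Y_M hYMN Y hY n C Nplus hdec hvan heig hsl1 hsl2 hsl3
    hb
end

section
/- Let r ≥ 1, let V be a finite-dimensional ℚ-vector space, H ⊆ V a subspace with dim_ℚ(V/H) = 1, and N_1, …, N_r pairwise commuting nilpotent endomorphisms of V with N_j(H) ⊆ H and N_j(V) = N_j(H) for all j. For A ∈ {H, V}, let (B^•(A), d) be the associated complex and IH^p(A) its cohomology. Then: (1) B^p(H) = B^p(V) for all p ≥ 1, and the induced map IH^p(H) → IH^p(V) is an isomorphism for all p ≥ 2; (2) writing K = ∩_{j=1}^r ker(N_j) ⊆ V, the sequence 0 → H ∩ K → K → V/H → IH^1(H) → IH^1(V) → 0 is exact, where the first map is the inclusion, the second is the restriction of the quotient map V → V/H, the third (connecting) map sends the class of v ∈ V to the class in IH^1(H) of the 1-cocycle (N_1 v, …, N_r v) ∈ B^1(H) (this is well-defined), and the last map is induced by the identity on 1-cocycles via B^1(H)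 = B^1(V). -/
/-
Every summand of `B^p` with `p ≥ 1` is the image of a product `N_S = N_{S∖j} N_j`, and
`N_j(V) = N_j(H)`, so `B^p(H) = B^p(V)` for `p ≥ 1`; part (1) follows at once. In degree 0,
`B^0(A) = A` sits in the `∅`-summand and `d` restricted to it is `c : v ↦ (N₁ v, …, N_r v)`, so the
1-coboundaries of `B^•(A)` are exactly `c(A)`, and `ker c = K`. Part (2) is then linear algebra
of the single map `c`: its values are cocycles because the `N_j` commute, and
`c(v) ∈ c(H) ↔ v ∈ H + K`.
-/

variable {r : ℕ} {V : Type*} [AddCommGroup V] [Module ℚ V]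

/-- The product `N_{j₁} ⋯ N_{jₚ}` over a subset `S = {j₁ < ⋯ < jₚ}` of the (pairwise
commuting) endomorphisms `N_j`. -/
def npow (N : Fin r → Module.End ℚ V) (hc : ∀ i j, Commute (N i) (N j))
    (S : Finset (Fin r)) : Module.End ℚ V :=
  S.noncommProd N fun i _ j _ _ => hc i j

/-- The graded piece `B^p(A) = ⊕_{j₁ < ⋯ < jₚ} N_{j₁} ⋯ N_{jₚ}(A)` of the complex
computing local intersection cohomology, realized as the submodule of functions
`f : Finset (Fin r) → V` supported on `p`-element subsets `S` with
`f S ∈ N_{j₁} ⋯ N_{jₚ}(A)` for `S = {j₁ < ⋯ < jₚ}`. -/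
def Bpiece (N : Fin r → Module.End ℚ V) (hc : ∀ i j, Commute (N i) (N j))
    (A : Submodule ℚ V) (p : ℕ) : Submodule ℚ (Finset (Fin r) → V) where
  carrier := {f | ∀ S : Finset (Fin r),
    (S.card = p → f S ∈ A.map (npow N hc S)) ∧ (S.card ≠ p → f S = 0)}
  add_mem' := by
    intro f g hf hg S
    refine ⟨fun h => ?_, fun h => ?_⟩
    · simpa using add_mem ((hf S).1 h) ((hg S).1 h)
    · simp [Pi.add_apply, (hf S).2 h, (hg S).2 h]
  zero_mem' := fun S => ⟨fun _ => zero_mem _, fun _ => rfl⟩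
  smul_mem' := by
    intro c f hf S
    refine ⟨fun h => ?_, fun h => ?_⟩
    · simpa using Submodule.smul_mem _ c ((hf S).1 h)
    · simp [Pi.smul_apply, (hf S).2 h]

/-- The differential of the complex `B^•`: on the summand indexed by omitting the
`q`-th smallest element `j` of `T` it acts by `(-1)^{q-1} N_j`. -/
def dB (N : Fin r → Module.End ℚ V) :
    (Finset (Fin r) → V) →ₗ[ℚ] (Finset (Fin r) → V) :=
  LinearMap.pi fun T : Finset (Fin r) =>
    ∑ j ∈ T, ((-1 : ℚ) ^ (T.filter (· < j)).card) •
      ((N j).comp (LinearMap.proj (T.erase j)))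

/-- The 1-cochain `(N₁ v, …, N_r v)` attached to `v`. -/
def cyc (N : Fin r → Module.End ℚ V) : V →ₗ[ℚ] (Finset (Fin r) → V) :=
  LinearMap.pi fun S : Finset (Fin r) =>
    if S.card = 1 then ∑ j ∈ S, (N j : V →ₗ[ℚ] V) else 0

section

variable (N : Fin r → Module.End ℚ V) (hc : ∀ i j, Commute (N i) (N j))

lemma npow_empty : npow N hc ∅ = 1 :=
  Finset.noncommProd_empty N _

lemma npow_eq_mul_of_mem {S : Finset (Fin r)} {j : Fin r} (hj : j ∈ S) :
    npow N hc S = npow N hc (S.erase j) * N j :=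
  (Finset.noncommProd_erase_mul S hj N _).symm

lemma map_npow_eq_of_map_eq {A B : Submodule ℚ V} (hAB : ∀ j, A.map (N j) = B.map (N j))
    {S : Finset (Fin r)} (hS : S.Nonempty) :
    A.map (npow N hc S) = B.map (npow N hc S) := by
  obtain ⟨j, hj⟩ := hS
  rw [npow_eq_mul_of_mem N hc hj, Module.End.mul_eq_comp, Submodule.map_comp,
    Submodule.map_comp, hAB j]

lemma Bpiece_eq_of_map_eq {A B : Submodule ℚ V} (hAB : ∀ j, A.map (N j) = B.map (N j))
    {p : ℕ} (hp : 1 ≤ p) : Bpiece N hc A p = Bpiece N hc B p := by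
  ext f
  refine forall_congr' fun S => and_congr_left fun _ => imp_congr_right fun hS => ?_
  rw [map_npow_eq_of_map_eq N hc hAB (Finset.card_pos.mp (by omega))]

lemma Bpiece_zero (A : Submodule ℚ V) :
    Bpiece N hc A 0 = A.map (LinearMap.single ℚ (fun _ => V) ∅) := by
  ext f
  simp only [Submodule.mem_map, LinearMap.coe_single]
  constructor
  · intro hf
    obtain ⟨a, ha, hfa⟩ := (hf ∅).1 Finset.card_empty
    refine ⟨a, by simpa [npow_empty] using ha, funext fun S => ?_⟩
    rcases eq_or_ne S ∅ with rfl | hS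
    · simpa [npow_empty] using hfa
    · rw [Pi.single_eq_of_ne hS, (hf S).2 (by simpa using hS)]
  · rintro ⟨a, ha, rfl⟩ S
    refine ⟨fun hS => ?_, fun hS => by simp [(Finset.card_ne_zero.mp hS).ne_empty]⟩
    rw [Finset.card_eq_zero.mp hS, npow_empty]
    simpa using ha

lemma dB_apply (f : Finset (Fin r) → V) (T : Finset (Fin r)) :
    dB N f T = ∑ j ∈ T, ((-1 : ℚ) ^ (T.filter (· < j)).card) • N j (f (T.erase j)) := by
  simp [dB]

@[simp]
lemma cyc_apply_singleton (v : V) (j : Fin r) : cyc N v {j} = N j v := by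
  simp [cyc]

lemma cyc_apply_of_card_ne_one (v : V) {T : Finset (Fin r)} (hT : T.card ≠ 1) :
    cyc N v T = 0 := by
  simp [cyc, hT]

lemma ker_cyc : LinearMap.ker (cyc N) = ⨅ j, LinearMap.ker (N j) := by
  ext v
  simp only [LinearMap.mem_ker, Submodule.mem_iInf]
  refine ⟨fun hv j => by rw [← cyc_apply_singleton, hv, Pi.zero_apply], fun hv => ?_⟩
  funext T
  by_cases hT : T.card = 1
  · obtain ⟨j, rfl⟩ := Finset.card_eq_one.mp hT
    simpa using hv j
  · exact cyc_apply_of_card_ne_one N v hT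

lemma dB_comp_single_empty : dB N ∘ₗ LinearMap.single ℚ (fun _ => V) ∅ = cyc N := by
  ext v T
  simp only [LinearMap.comp_apply, LinearMap.coe_single, dB_apply]
  by_cases hT : T.card = 1
  · obtain ⟨j, rfl⟩ := Finset.card_eq_one.mp hT
    rw [Finset.sum_singleton, Finset.erase_singleton, Pi.single_eq_same,
      Finset.filter_eq_empty_iff.mpr (by simp), Finset.card_empty, pow_zero, one_smul,
      cyc_apply_singleton]
  · rw [cyc_apply_of_card_ne_one N v hT]
    refine Finset.sum_eq_zero fun j hj => ?_
    have hne : T.erase j ≠ ∅ := by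
      rw [← Finset.nonempty_iff_ne_empty, ← Finset.card_pos, Finset.card_erase_of_mem hj]
      have := Finset.card_pos.mpr ⟨j, hj⟩
      omega
    rw [Pi.single_eq_of_ne hne, map_zero, smul_zero]

lemma map_dB_Bpiece_zero (A : Submodule ℚ V) :
    (Bpiece N hc A 0).map (dB N) = A.map (cyc N) := by
  rw [Bpiece_zero, ← Submodule.map_comp, dB_comp_single_empty]

lemma cyc_mem_Bpiece_one (v : V) : cyc N v ∈ Bpiece N hc ⊤ 1 := by
  intro S
  refine ⟨fun hS => ?_, cyc_apply_of_card_ne_one N v⟩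
  obtain ⟨j, rfl⟩ := Finset.card_eq_one.mp hS
  rw [cyc_apply_singleton, npow, Finset.noncommProd_singleton]
  exact Submodule.mem_map_of_mem Submodule.mem_top

include hc in
lemma dB_cyc_pair (v : V) {a b : Fin r} (hab : a < b) : dB N (cyc N v) {a, b} = 0 := by
  have hfa : ({a, b} : Finset (Fin r)).filter (· < a) = ∅ := by
    simp [Finset.filter_insert, Finset.filter_singleton, hab.not_gt]
  have hfb : ({a, b} : Finset (Fin r)).filter (· < b) = {a} := by
    simp [Finset.filter_insert, Finset.filter_singleton, hab]
  rw [dB_apply, Finset.sum_pair hab.ne, hfa, hfb, Finset.erase_insert (by simp [hab.ne]),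
    Finset.pair_comm, Finset.erase_insert (by simp [hab.ne'])]
  simp [← Module.End.mul_apply, (hc a b).eq]

include hc in
lemma dB_cyc (v : V) : dB N (cyc N v) = 0 := by
  funext T
  by_cases hT : T.card = 2
  · obtain ⟨a, b, hab, rfl⟩ := Finset.card_eq_two.mp hT
    rcases hab.lt_or_gt with h | h
    · exact dB_cyc_pair N hc v h
    · rw [Finset.pair_comm]
      exact dB_cyc_pair N hc v h
  · rw [dB_apply]
    refine Finset.sum_eq_zero fun j hj => ?_
    have := Finset.card_pos.mpr ⟨j, hj⟩
    rw [cyc_apply_of_card_ne_one N v (by rw [Finset.card_erase_of_mem hj]; omega), map_zero,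
      smul_zero]

end

theorem zero_loci_stmt14_general (r : ℕ)
    {V : Type*} [AddCommGroup V] [Module ℚ V]
    (H : Submodule ℚ V)
    (N : Fin r → Module.End ℚ V) (hc : ∀ i j, Commute (N i) (N j))
    (hNV : ∀ j, Submodule.map (N j) (⊤ : Submodule ℚ V) = Submodule.map (N j) H) :
    -- (1): B^p(H) = B^p(V) for p ≥ 1, and IH^p(H) ≅ IH^p(V) for p ≥ 2
    (∀ p : ℕ, 1 ≤ p → Bpiece N hc H p = Bpiece N hc ⊤ p) ∧
    (∀ p : ℕ, 2 ≤ p →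
      Bpiece N hc H p ⊓ LinearMap.ker (dB N) = Bpiece N hc ⊤ p ⊓ LinearMap.ker (dB N) ∧
      Submodule.map (dB N) (Bpiece N hc H (p - 1)) =
        Submodule.map (dB N) (Bpiece N hc ⊤ (p - 1))) ∧
    -- (2): exactness of 0 → H ∩ K → K → V/H → IH¹(H) → IH¹(V) → 0
    (let K : Submodule ℚ V := ⨅ j, LinearMap.ker (N j)
     -- exactness at H ∩ K: the inclusion H ∩ K → K is injective
     Function.Injective (Submodule.inclusion (inf_le_right : H ⊓ K ≤ K)) ∧
     -- exactness at K: the kernel of K → V/H is H ∩ K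
     (∀ v ∈ K, (H.mkQ v = 0 ↔ v ∈ H ⊓ K)) ∧
     -- the connecting map is well defined: (N₁ v, …, N_r v) is a cocycle in B¹(H),
     -- and for v ∈ H it is a coboundary
     (∀ v : V, cyc N v ∈ Bpiece N hc H 1 ⊓ LinearMap.ker (dB N)) ∧
     (∀ v ∈ H, cyc N v ∈ Submodule.map (dB N) (Bpiece N hc H 0)) ∧
     -- exactness at V/H: the class of v dies in IH¹(H) iff it comes from K
     (∀ v : V, cyc N v ∈ Submodule.map (dB N) (Bpiece N hc H 0) ↔
        ∃ u ∈ K, v - u ∈ H) ∧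
     -- exactness at IH¹(H): a cocycle for H bounds in B^•(V) iff it differs from a
     -- connecting cocycle by a coboundary of B^•(H)
     (∀ f ∈ Bpiece N hc H 1 ⊓ LinearMap.ker (dB N),
        (f ∈ Submodule.map (dB N) (Bpiece N hc ⊤ 0) ↔
          ∃ v : V, f - cyc N v ∈ Submodule.map (dB N) (Bpiece N hc H 0))) ∧
     -- exactness at IH¹(V): surjectivity of IH¹(H) → IH¹(V)
     (∀ f ∈ Bpiece N hc ⊤ 1 ⊓ LinearMap.ker (dB N),
        ∃ g ∈ Bpiece N hc H 1 ⊓ LinearMap.ker (dB N),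
          f - g ∈ Submodule.map (dB N) (Bpiece N hc ⊤ 0))) := by
  have hB {p : ℕ} (hp : 1 ≤ p) : Bpiece N hc H p = Bpiece N hc ⊤ p :=
    Bpiece_eq_of_map_eq N hc (fun j => (hNV j).symm) hp
  refine ⟨fun p => hB, fun p hp => ⟨by rw [hB (by omega)], by rw [hB (by omega)]⟩, ?_⟩
  intro K
  simp only [map_dB_Bpiece_zero, Submodule.map_top]
  refine ⟨Submodule.inclusion_injective _, fun v hv => by simp [hv], fun v => ?_,
    fun v hv => Submodule.mem_map_of_mem hv, fun v => ?_, fun f _ => ?_,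
    fun f hf => ⟨f, by rwa [hB le_rfl], by simp⟩⟩
  · rw [hB le_rfl]
    exact ⟨cyc_mem_Bpiece_one N hc v, dB_cyc N hc v⟩
  · rw [← Submodule.mem_comap, Submodule.comap_map_eq, ker_cyc, sup_comm, Submodule.mem_sup]
    constructor
    · rintro ⟨u, hu, h, hh, rfl⟩
      exact ⟨u, hu, by simpa using hh⟩
    · rintro ⟨u, hu, hvu⟩
      exact ⟨u, hu, v - u, hvu, add_sub_cancel u v⟩
  · constructor
    · rintro ⟨v, rfl⟩
      exact ⟨v, by simp⟩
    · rintro ⟨v, h, hh, hhv⟩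
      exact ⟨v + h, by rw [map_add, hhv, add_sub_cancel]⟩

/-- for `H ⊆ V` of codimension one and pairwise commuting nilpotent
endomorphisms `N_j` with `N_j(H) ⊆ H` and `N_j(V) = N_j(H)`:
(1) `B^p(H) = B^p(V)` for `p ≥ 1`, and the induced map `IH^p(H) → IH^p(V)` is an
isomorphism for `p ≥ 2` (the cocycle and coboundary submodules agree);
(2) with `K = ∩ ker N_j`, the sequence
`0 → H ∩ K → K → V/H → IH¹(H) → IH¹(V) → 0` is exact, where the connecting map sends
the class of `v` to the class of the (well-defined) cocycle `(N₁ v, …, N_r v)` and the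
last map is induced by the identity on 1-cocycles. -/
theorem zero_loci_stmt14 (r : ℕ) (hr : 1 ≤ r)
    {V : Type*} [AddCommGroup V] [Module ℚ V] [FiniteDimensional ℚ V]
    (H : Submodule ℚ V) (hdim : Module.finrank ℚ (V ⧸ H) = 1)
    (N : Fin r → Module.End ℚ V) (hc : ∀ i j, Commute (N i) (N j))
    (hnil : ∀ j, IsNilpotent (N j))
    (hNH : ∀ j, ∀ v ∈ H, N j v ∈ H)
    (hNV : ∀ j, Submodule.map (N j) (⊤ : Submodule ℚ V) = Submodule.map (N j) H) :
    -- (1): B^p(H) = B^p(V) for p ≥ 1, and IH^p(H) ≅ IH^p(V) for p ≥ 2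
    (∀ p : ℕ, 1 ≤ p → Bpiece N hc H p = Bpiece N hc ⊤ p) ∧
    (∀ p : ℕ, 2 ≤ p →
      Bpiece N hc H p ⊓ LinearMap.ker (dB N) = Bpiece N hc ⊤ p ⊓ LinearMap.ker (dB N) ∧
      Submodule.map (dB N) (Bpiece N hc H (p - 1)) =
        Submodule.map (dB N) (Bpiece N hc ⊤ (p - 1))) ∧
    -- (2): exactness of 0 → H ∩ K → K → V/H → IH¹(H) → IH¹(V) → 0
    (let K : Submodule ℚ V := ⨅ j, LinearMap.ker (N j)
     -- exactness at H ∩ K: the inclusion H ∩ K → K is injective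
     Function.Injective (Submodule.inclusion (inf_le_right : H ⊓ K ≤ K)) ∧
     -- exactness at K: the kernel of K → V/H is H ∩ K
     (∀ v ∈ K, (H.mkQ v = 0 ↔ v ∈ H ⊓ K)) ∧
     -- the connecting map is well defined: (N₁ v, …, N_r v) is a cocycle in B¹(H),
     -- and for v ∈ H it is a coboundary
     (∀ v : V, cyc N v ∈ Bpiece N hc H 1 ⊓ LinearMap.ker (dB N)) ∧
     (∀ v ∈ H, cyc N v ∈ Submodule.map (dB N) (Bpiece N hc H 0)) ∧
     -- exactness at V/H: the class of v dies in IH¹(H) iff it comes from K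
     (∀ v : V, cyc N v ∈ Submodule.map (dB N) (Bpiece N hc H 0) ↔
        ∃ u ∈ K, v - u ∈ H) ∧
     -- exactness at IH¹(H): a cocycle for H bounds in B^•(V) iff it differs from a
     -- connecting cocycle by a coboundary of B^•(H)
     (∀ f ∈ Bpiece N hc H 1 ⊓ LinearMap.ker (dB N),
        (f ∈ Submodule.map (dB N) (Bpiece N hc ⊤ 0) ↔
          ∃ v : V, f - cyc N v ∈ Submodule.map (dB N) (Bpiece N hc H 0))) ∧
     -- exactness at IH¹(V): surjectivity of IH¹(H) → IH¹(V)
     (∀ f ∈ Bpiece N hc ⊤ 1 ⊓ LinearMap.ker (dB N),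
        ∃ g ∈ Bpiece N hc H 1 ⊓ LinearMap.ker (dB N),
          f - g ∈ Submodule.map (dB N) (Bpiece N hc ⊤ 0))) :=
  zero_loci_stmt14_general r H N hc hNV
end

section
/- Let V be a finite-dimensional ℚ-vector space with a filtration 0 = W_{−2} ⊆ W_{−1} ⊆ W_0 = V such that dim_ℚ(V/W_{−1}) = 1, and let N be a nilpotent endomorphism of V with N(W_{−1}) ⊆ W_{−1} (note that then automatically N(V) ⊆ W_{−1}, since N induces a nilpotent, hence zero, endomorphism of the one-dimensional quotient V/W_{−1}). If the relative weight filtration M = M(N,W) exists, then N(V) = N(W_{−1}). -/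
open Module Submodule

theorem Module.End.eq_zero_of_isNilpotent_of_finrank_eq_one {K E : Type*} [Field K]
    [AddCommGroup E] [Module K E] (hE : finrank K E = 1) {φ : Module.End K E}
    (hφ : IsNilpotent φ) : φ = 0 := by
  have : Module.Finite K E := Module.finite_of_finrank_eq_succ hE
  simpa [hφ.charpoly_eq_X_pow_finrank, hE] using φ.aeval_self_charpoly

theorem Module.End.range_le_of_finrank_quotient_eq_one {K E : Type*} [Field K]
    [AddCommGroup E] [Module K E] {H : Submodule K E} (hH : finrank K (E ⧸ H) = 1)
    {N : Module.End K E} (hN : IsNilpotent N) (hNH : H ≤ H.comap N) :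
    LinearMap.range N ≤ H := by
  rintro _ ⟨x, rfl⟩
  have hzero := Module.End.eq_zero_of_isNilpotent_of_finrank_eq_one hH
    (Module.End.IsNilpotent.mapQ hNH hN)
  simpa using LinearMap.congr_fun hzero (H.mkQ x)

section Induction

variable {α : Type*} [SemilatticeSup α] {L : ℤ → α} {s : α} {n : ℤ}

theorem le_sup_of_forall_lt_le_pred_sup (h : ∀ i, n < i → L i ≤ L (i - 1) ⊔ s) :
    ∀ i, n ≤ i → L i ≤ L n ⊔ s := by
  refine Int.leInduction le_sup_left fun i hi ih => ?_
  calc L (i + 1) ≤ L i ⊔ s := by simpa using h (i + 1) (by omega)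
    _ ≤ L n ⊔ s := sup_le ih le_sup_right

theorem le_sup_of_forall_le_le_sup_pred (h : ∀ i, i ≤ n → L i ≤ s ⊔ L (i - 1)) :
    ∀ i, i ≤ n → L n ≤ s ⊔ L i := by
  refine Int.leInductionDown le_sup_right fun i hi ih => ?_
  calc L n ≤ s ⊔ L i := ih
    _ ≤ s ⊔ L (i - 1) := sup_le le_sup_left (h i hi)

end Induction

namespace IsRelWeightFil

variable {k V : Type*} [Field k] [AddCommGroup V] [Module k V] {W M : ℤ → Submodule k V}
  {N : Module.End k V}

theorem inf_le_pred_sup (hM : IsRelWeightFil W M N) {j : ℤ} (hN : ∀ v ∈ W j, N v ∈ W (j - 1))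
    (hW : ∀ v ∈ W (j - 1), N v ∈ W (j - 1)) {i : ℤ} (hi : j < i) :
    M i ⊓ W j ≤ M (i - 1) ⊔ W (j - 1) := by
  obtain ⟨m, hm, rfl⟩ : ∃ m : ℕ, 1 ≤ m ∧ i = j + m := ⟨(i - j).toNat, by omega, by omega⟩
  intro u hu
  have hNu : (N ^ m) u ∈ W (j - 1) := by
    rw [← Nat.sub_add_cancel hm, pow_succ, Module.End.mul_apply]
    exact Module.End.pow_apply_mem_of_forall_mem _ hW _ (hN u hu.2)
  have hu' := (hM.2.2 j m hm).2 u hu (mem_sup_right hNu)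
  exact sup_le_sup_right (inf_le_left : M (j + m - 1) ⊓ W j ≤ _) _ hu'

theorem inf_le_map_sup (hM : IsRelWeightFil W M N) {j : ℤ} (hW : ∀ v ∈ W j, N v ∈ W j)
    {i : ℤ} (hi : i < j) :
    M i ⊓ W j ≤ map N (W j) ⊔ ((M (i - 1) ⊓ W j) ⊔ W (j - 1)) := by
  obtain ⟨m, hm, rfl⟩ : ∃ m : ℕ, 1 ≤ m ∧ i = j - m := ⟨(j - i).toNat, by omega, by omega⟩
  intro v hv
  obtain ⟨u, hu, huv⟩ := (hM.2.2 j m hm).1 v hv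
  have hNu : (N ^ m) u ∈ map N (W j) := by
    rw [← Nat.sub_add_cancel hm, pow_succ', Module.End.mul_apply]
    exact mem_map_of_mem (Module.End.pow_apply_mem_of_forall_mem _ hW _ hu.2)
  simpa using sub_mem (mem_sup_left hNu) (mem_sup_right huv)

theorem sup_eq_top (hM : IsRelWeightFil W M N) {j : ℤ} (htop : W j = ⊤)
    (hN : ∀ v, N v ∈ W (j - 1)) (hW : ∀ v ∈ W (j - 1), N v ∈ W (j - 1)) :
    M j ⊔ W (j - 1) = ⊤ := by
  obtain ⟨hmono, -, b, hb⟩ := hM.1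
  have step (i : ℤ) (hi : j < i) : M i ≤ M (i - 1) ⊔ W (j - 1) := by
    simpa [htop] using hM.inf_le_pred_sup (fun v _ => hN v) hW hi
  rw [eq_top_iff, ← hb]
  calc M b ≤ M (max b j) := hmono (le_max_left b j)
    _ ≤ M j ⊔ W (j - 1) := le_sup_of_forall_lt_le_pred_sup step _ (le_max_right b j)

theorem inf_le_map (hM : IsRelWeightFil W M N) {j : ℤ} (hW : ∀ v ∈ W j, N v ∈ W j)
    (hbot : W (j - 1) = ⊥) {i : ℤ} (hi : i < j) : M i ⊓ W j ≤ map N (W j) := by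
  obtain ⟨hmono, ⟨a, ha⟩, -⟩ := hM.1
  have step (i' : ℤ) (hi' : i' ≤ i) :
      M i' ⊓ W j ≤ map N (W j) ⊔ (M (i' - 1) ⊓ W j) := by
    simpa [hbot] using hM.inf_le_map_sup hW (i := i') (by omega)
  have hbot' : M (min a i) = ⊥ := le_bot_iff.mp (ha ▸ hmono (min_le_left a i))
  simpa [hbot'] using
    le_sup_of_forall_le_le_sup_pred (L := fun i => M i ⊓ W j) step _ (min_le_right a i)

end IsRelWeightFil

theorem zero_loci_stmt15_general {V : Type*} [AddCommGroup V] [Module ℚ V]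
    (H : Submodule ℚ V) (hdim : Module.finrank ℚ (V ⧸ H) = 1)
    (N : Module.End ℚ V) (hnil : IsNilpotent N) (hNH : ∀ v ∈ H, N v ∈ H)
    (W : ℤ → Submodule ℚ V)
    (hWbot : ∀ i : ℤ, i ≤ -2 → W i = ⊥) (hWH : W (-1) = H)
    (hWtop : ∀ i : ℤ, 0 ≤ i → W i = ⊤)
    (M : ℤ → Submodule ℚ V) (hM : IsRelWeightFil W M N) :
    Submodule.map N (⊤ : Submodule ℚ V) = Submodule.map N H := by
  have hNV (v : V) : N v ∈ H :=
    Module.End.range_le_of_finrank_quotient_eq_one hdim hnil hNH (LinearMap.mem_range_self N v)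
  have hV : M 0 ⊔ H = ⊤ := by
    simpa [hWH] using hM.sup_eq_top (j := 0) (hWtop 0 le_rfl) (by simpa [hWH] using hNV)
      (by simpa [hWH] using hNH)
  have hM2 : M (-2) ⊓ H ≤ map N H := by
    simpa [hWH] using hM.inf_le_map (j := -1) (by rwa [hWH]) (hWbot _ (by norm_num))
      (by norm_num : (-2 : ℤ) < -1)
  refine le_antisymm ?_ (map_mono le_top)
  rw [← hV, Submodule.map_sup]
  refine sup_le ?_ le_rfl
  rintro _ ⟨x, hx, rfl⟩
  exact hM2 ⟨by simpa using hM.2.1 0 x hx, hNV x⟩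

/-- for `0 = W₋₂ ⊆ W₋₁ ⊆ W₀ = V` with `dim V/W₋₁ = 1` and a nilpotent
`N` with `N(W₋₁) ⊆ W₋₁`, the existence of the relative weight filtration `M(N, W)`
forces `N(V) = N(W₋₁)`. -/
theorem zero_loci_stmt15 {V : Type*} [AddCommGroup V] [Module ℚ V] [FiniteDimensional ℚ V]
    (H : Submodule ℚ V) (hdim : Module.finrank ℚ (V ⧸ H) = 1)
    (N : Module.End ℚ V) (hnil : IsNilpotent N) (hNH : ∀ v ∈ H, N v ∈ H)
    (W : ℤ → Submodule ℚ V)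
    (hWbot : ∀ i : ℤ, i ≤ -2 → W i = ⊥) (hWH : W (-1) = H)
    (hWtop : ∀ i : ℤ, 0 ≤ i → W i = ⊤)
    (M : ℤ → Submodule ℚ V) (hM : IsRelWeightFil W M N) :
    Submodule.map N (⊤ : Submodule ℚ V) = Submodule.map N H :=
  zero_loci_stmt15_general H hdim N hnil hNH W hWbot hWH hWtop M hM
end

section
/- Let V be a finite-dimensional complex normed vector space, N a nilpotent endomorphism of V, a > 0, and (g_k)_{k≥1} a sequence in End(V) such that (ad N)^{k+1}(g_k) = 0 for every k ≥ 1 and the series Σ_{k≥1} ‖g_k‖ y^{−k} converges for every y > a. Define g(y) = 1 + Σ_{k≥1} g_k y^{−k} ∈ End(V) for y > a. Then the limit lim_{y→∞} e^{−iyN} g(y) e^{iyN} exists and equals 1 + Σ_{k≥1} ((−i)^k / k!) (ad N)^k (g_k), the latter series being absolutely convergent. -/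
/-!
Conjugation by `exp (s • N)` is `exp (s • ad N)`. Since `(ad N)^(k+2) g_k = 0`, the `k`-th term
of the conjugated series is `y^{-(k+1)} ∑_{m ≤ k+1} ((-iy)^m / m!) (ad N)^m g_k`, a polynomial in
`1/y` whose value at `0` is its top-degree term `((-i)^(k+1) / (k+1)!) (ad N)^(k+1) g_k`. For
`y ≥ y₀ > a` the term is bounded by `e^{‖ad N‖ y₀} ‖g_k‖ y₀^{-(k+1)}`, which is summable, so
Tannery's theorem lets the limit `y → ∞` pass through the sum.
-/

open NormedSpace Finset Filter Topology
open scoped Nat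

namespace ContinuousLinearMap

section NormedAlgebra

variable (𝕜 : Type*) [RCLike 𝕜] {A : Type*} [NormedRing A] [NormedAlgebra 𝕜 A]

noncomputable def ad (N : A) : A →L[𝕜] A := mul 𝕜 A N - (mul 𝕜 A).flip N

variable (A) in
noncomputable def mulLeftRingHom : A →+* (A →L[𝕜] A) where
  toFun := mul 𝕜 A
  map_one' := by ext; simp
  map_mul' x y := by ext; simp [mul_assoc]
  map_zero' := by simp
  map_add' := by simp

variable (A) in
noncomputable def mulRightRingHom : Aᵐᵒᵖ →+* (A →L[𝕜] A) where
  toFun x := (mul 𝕜 A).flip x.unop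
  map_one' := by ext; simp
  map_mul' x y := by ext; simp [mul_assoc]
  map_zero' := by ext; simp
  map_add' x y := by ext; simp

variable {𝕜}

@[simp]
lemma ad_apply (N X : A) : ad 𝕜 N X = N * X - X * N := rfl

lemma ad_pow_apply (N X : A) (m : ℕ) :
    (ad 𝕜 N ^ m) X = (fun Y : A => N * Y - Y * N)^[m] X := by
  induction m generalizing X with
  | zero => rfl
  | succ m ih => rw [pow_succ', mul_apply_eq_comp, ih, Function.iterate_succ_apply']; rfl

lemma ad_smul (s : 𝕜) (N : A) : ad 𝕜 (s • N) = s • ad 𝕜 N := by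
  ext X; simp [smul_sub]

variable [CompleteSpace A]

/-- Left and right multiplication are continuous ring homomorphisms into `A →L[𝕜] A`, so they
commute with `exp`, and their images commute, so `exp (L N) * exp (-R N) = exp (L N - R N)`. -/
lemma exp_mul_mul_exp_neg (N X : A) : exp N * X * exp (-N) = exp (ad 𝕜 N) X := by
  let : NormedAlgebra ℚ A := .restrictScalars ℚ 𝕜 A
  let : NormedAlgebra ℚ (A →L[𝕜] A) := .restrictScalars ℚ 𝕜 _
  have hL : mulLeftRingHom 𝕜 A (exp N) = exp (mul 𝕜 A N) :=
    map_exp (mulLeftRingHom 𝕜 A) (mul 𝕜 A).continuous N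
  have hR_cont : Continuous (mulRightRingHom 𝕜 A) :=
    (mul 𝕜 A).flip.continuous.comp MulOpposite.continuous_unop
  have hR : mulRightRingHom 𝕜 A (MulOpposite.op (exp (-N))) = exp (-(mul 𝕜 A).flip N) := by
    rw [← exp_op, map_exp _ hR_cont]
    congr 1; ext; simp [mulRightRingHom]
  have hcomm : Commute (mul 𝕜 A N) (-(mul 𝕜 A).flip N) :=
    Commute.neg_right (by ext; simp [mul_assoc])
  calc exp N * X * exp (-N)
      = (mulLeftRingHom 𝕜 A (exp N) * mulRightRingHom 𝕜 A (MulOpposite.op (exp (-N)))) X := by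
        simp [mulLeftRingHom, mulRightRingHom, mul_assoc]
    _ = exp (ad 𝕜 N) X := by
        rw [hL, hR, ← exp_add_of_commute hcomm, ← sub_eq_add_neg]; rfl

lemma exp_mul_one_add_tsum_mul_exp_neg {ι : Type*} (N : A) {t : ι → A} (ht : Summable t) :
    exp N * (1 + ∑' i, t i) * exp (-N) = 1 + ∑' i, exp (ad 𝕜 N) (t i) := by
  have hunit : exp N * exp (-N) = 1 := by
    let : NormedAlgebra ℚ A := .restrictScalars ℚ 𝕜 A
    rw [← exp_add_of_commute (Commute.refl N).neg_right, add_neg_cancel, exp_zero]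
  rw [mul_add, add_mul, mul_one, hunit, exp_mul_mul_exp_neg (𝕜 := 𝕜), (exp (ad 𝕜 N)).map_tsum ht]

end NormedAlgebra

section Operator

variable {𝕜 E : Type*} [NormedAddCommGroup E]

lemma norm_pow_apply_le [NontriviallyNormedField 𝕜] [NormedSpace 𝕜 E] (T : E →L[𝕜] E) (n : ℕ)
    (x : E) : ‖(T ^ n) x‖ ≤ ‖T‖ ^ n * ‖x‖ := by
  induction n with
  | zero => simp
  | succ n ih =>
    rw [pow_succ', mul_apply_eq_comp, pow_succ', mul_assoc]
    exact (T.le_opNorm _).trans (mul_le_mul_of_nonneg_left ih (norm_nonneg T))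

lemma exp_apply_eq_sum_of_pow_apply_eq_zero [RCLike 𝕜] [NormedSpace 𝕜 E] [CompleteSpace E]
    (T : E →L[𝕜] E) {x : E} {n : ℕ} (hx : (T ^ n) x = 0) :
    exp T x = ∑ m ∈ range n, ((m ! : 𝕜)⁻¹) • (T ^ m) x := by
  have hvanish : ∀ m ∉ range n, ((m ! : 𝕜)⁻¹) • (T ^ m) x = 0 := by
    intro m hm
    obtain ⟨j, rfl⟩ := Nat.exists_eq_add_of_le (by simpa using hm)
    rw [add_comm, pow_add, mul_apply_eq_comp, hx, map_zero, smul_zero]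
  rw [exp_eq_tsum 𝕜]
  exact ((apply 𝕜 E x).map_tsum (expSeries_summable' T)).trans (tsum_eq_sum hvanish)

end Operator

end ContinuousLinearMap

open ContinuousLinearMap

section ComplexOperator

open Complex (I)

variable {E : Type*} [NormedAddCommGroup E] [NormedSpace ℂ E] [CompleteSpace E] (T : E →L[ℂ] E)
  {x : E} {n : ℕ}

lemma inv_pow_smul_exp_apply_eq_sum (hx : (T ^ (n + 1)) x = 0) {y : ℂ} (hy : y ≠ 0) :
    (y ^ n)⁻¹ • exp ((-y * I) • T) x =
      ∑ m ∈ range (n + 1), ((-I) ^ m * (m ! : ℂ)⁻¹ * y⁻¹ ^ (n - m)) • (T ^ m) x := by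
  have hx' : (((-y * I) • T) ^ (n + 1)) x = 0 := by
    rw [smul_pow, smul_apply, hx, smul_zero]
  rw [exp_apply_eq_sum_of_pow_apply_eq_zero _ hx', smul_sum]
  refine sum_congr rfl fun m hm => ?_
  obtain ⟨j, rfl⟩ := Nat.exists_eq_add_of_le (Nat.lt_succ_iff.mp (mem_range.mp hm))
  rw [smul_pow, smul_apply, smul_smul, smul_smul, Nat.add_sub_cancel_left, inv_pow]
  congr 1
  field_simp
  ring

lemma tendsto_inv_pow_smul_exp_apply (hx : (T ^ (n + 1)) x = 0) :
    Tendsto (fun y : ℝ => ((y : ℂ) ^ n)⁻¹ • exp ((-(y : ℂ) * I) • T) x) atTop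
      (𝓝 (((-I) ^ n * (n ! : ℂ)⁻¹) • (T ^ n) x)) := by
  set P : ℂ → E := fun z =>
    ∑ m ∈ range (n + 1), ((-I) ^ m * (m ! : ℂ)⁻¹ * z ^ (n - m)) • (T ^ m) x
  have hP_zero : P 0 = ((-I) ^ n * (n ! : ℂ)⁻¹) • (T ^ n) x := by
    simp only [P]
    rw [sum_range_succ, sum_eq_zero fun m hm => ?_, Nat.sub_self, pow_zero, mul_one, zero_add]
    rw [zero_pow (Nat.sub_ne_zero_of_lt (mem_range.mp hm)), mul_zero, zero_smul]
  have hinv : Tendsto (fun y : ℝ => (y : ℂ)⁻¹) atTop (𝓝 0) := by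
    simpa [Function.comp_def] using
      (Complex.continuous_ofReal.tendsto 0).comp tendsto_inv_atTop_zero
  rw [← hP_zero]
  refine (((by fun_prop : Continuous P).tendsto 0).comp hinv).congr' ?_
  filter_upwards [eventually_gt_atTop 0] with y hy
  exact (inv_pow_smul_exp_apply_eq_sum T hx (Complex.ofReal_ne_zero.mpr hy.ne')).symm

lemma norm_inv_pow_smul_exp_apply_le (hx : (T ^ (n + 1)) x = 0) {y₀ y : ℝ} (hy₀ : 0 < y₀)
    (hy : y₀ ≤ y) :
    ‖((y : ℂ) ^ n)⁻¹ • exp ((-(y : ℂ) * I) • T) x‖ ≤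
      Real.exp (‖T‖ * y₀) * (‖x‖ * (y₀ ^ n)⁻¹) := by
  have hy_pos : 0 < y := hy₀.trans_le hy
  rw [inv_pow_smul_exp_apply_eq_sum T hx (Complex.ofReal_ne_zero.mpr hy_pos.ne')]
  have hterm : ∀ m ∈ range (n + 1),
      ‖((-I) ^ m * (m ! : ℂ)⁻¹ * (y : ℂ)⁻¹ ^ (n - m)) • (T ^ m) x‖ ≤
        (‖T‖ * y₀) ^ m / m ! * (‖x‖ * (y₀ ^ n)⁻¹) := by
    intro m hm
    obtain ⟨j, rfl⟩ := Nat.exists_eq_add_of_le (Nat.lt_succ_iff.mp (mem_range.mp hm))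
    have hcoeff : ‖(-I) ^ m * (m ! : ℂ)⁻¹ * (y : ℂ)⁻¹ ^ (m + j - m)‖ ≤
        (m ! : ℝ)⁻¹ * (y₀ ^ j)⁻¹ := by
      rw [Nat.add_sub_cancel_left]
      simp [abs_of_pos hy_pos]
      gcongr
    calc _ ≤ (m ! : ℝ)⁻¹ * (y₀ ^ j)⁻¹ * (‖T‖ ^ m * ‖x‖) :=
          (norm_smul_le _ _).trans
            (mul_le_mul hcoeff (T.norm_pow_apply_le m x) (norm_nonneg _) (by positivity))
      _ = (‖T‖ * y₀) ^ m / m ! * (‖x‖ * (y₀ ^ (m + j))⁻¹) := by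
          field_simp
          ring
  calc _ ≤ ∑ m ∈ range (n + 1), (‖T‖ * y₀) ^ m / m ! * (‖x‖ * (y₀ ^ n)⁻¹) :=
        (norm_sum_le _ _).trans (sum_le_sum hterm)
    _ ≤ Real.exp (‖T‖ * y₀) * (‖x‖ * (y₀ ^ n)⁻¹) := by
        rw [← sum_mul]
        gcongr
        exact Real.sum_le_exp_of_nonneg (by positivity) _

theorem tendsto_tsum_inv_pow_smul_exp_apply {x : ℕ → E} (hx : ∀ k, (T ^ (k + 2)) (x k) = 0)
    {a : ℝ} (hsum : ∀ y : ℝ, a < y → Summable fun k : ℕ => ‖x k‖ * (y ^ (k + 1))⁻¹) :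
    (Summable fun k : ℕ => ‖((-I) ^ (k + 1) * ((k + 1)! : ℂ)⁻¹) • (T ^ (k + 1)) (x k)‖) ∧
    Tendsto (fun y : ℝ => ∑' k : ℕ, ((y : ℂ) ^ (k + 1))⁻¹ • exp ((-(y : ℂ) * I) • T) (x k))
      atTop (𝓝 (∑' k : ℕ, ((-I) ^ (k + 1) * ((k + 1)! : ℂ)⁻¹) • (T ^ (k + 1)) (x k))) := by
  set y₀ := max a 0 + 1
  have hy₀ : 0 < y₀ := by positivity
  have hay₀ : a < y₀ := (le_max_left a 0).trans_lt (lt_add_one _)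
  have hbound : Summable fun k : ℕ => Real.exp (‖T‖ * y₀) * (‖x k‖ * (y₀ ^ (k + 1))⁻¹) :=
    (hsum y₀ hay₀).mul_left _
  have hlim k := tendsto_inv_pow_smul_exp_apply T (hx k)
  have hle : ∀ᶠ y : ℝ in atTop, ∀ k,
      ‖((y : ℂ) ^ (k + 1))⁻¹ • exp ((-(y : ℂ) * I) • T) (x k)‖ ≤
        Real.exp (‖T‖ * y₀) * (‖x k‖ * (y₀ ^ (k + 1))⁻¹) :=
    (eventually_ge_atTop y₀).mono fun y hy k => norm_inv_pow_smul_exp_apply_le T (hx k) hy₀ hy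
  exact ⟨hbound.of_nonneg_of_le (fun _ => norm_nonneg _)
      fun k => le_of_tendsto (hlim k).norm (hle.mono fun _ h => h k),
    tendsto_tsum_of_dominated_convergence hbound hlim hle⟩

end ComplexOperator

theorem zero_loci_stmt16_general {V : Type*} [NormedAddCommGroup V] [NormedSpace ℂ V]
    [FiniteDimensional ℂ V]
    (N : V →L[ℂ] V) (a : ℝ)
    (g : ℕ → V →L[ℂ] V)
    (hker : ∀ k : ℕ, (fun X : V →L[ℂ] V => N * X - X * N)^[k + 2] (g k) = 0)
    (hsum : ∀ y : ℝ, a < y → Summable fun k : ℕ => ‖g k‖ * (y ^ (k + 1))⁻¹) :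
    (Summable fun k : ℕ =>
      ‖((-Complex.I) ^ (k + 1) * (((k + 1).factorial : ℂ))⁻¹) •
        (fun X : V →L[ℂ] V => N * X - X * N)^[k + 1] (g k)‖) ∧
    Filter.Tendsto
      (fun y : ℝ =>
        NormedSpace.exp ((-(y : ℂ) * Complex.I) • N) *
          (1 + ∑' k : ℕ, ((y : ℂ) ^ (k + 1))⁻¹ • g k) *
          NormedSpace.exp (((y : ℂ) * Complex.I) • N))
      Filter.atTop
      (nhds (1 + ∑' k : ℕ,
        ((-Complex.I) ^ (k + 1) * (((k + 1).factorial : ℂ))⁻¹) •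
          (fun X : V →L[ℂ] V => N * X - X * N)^[k + 1] (g k))) := by
  simp only [← ad_pow_apply (𝕜 := ℂ) N] at hker ⊢
  obtain ⟨hsummable, hlim⟩ := tendsto_tsum_inv_pow_smul_exp_apply (ad ℂ N) hker hsum
  refine ⟨hsummable, (hlim.const_add 1).congr' ?_⟩
  filter_upwards [eventually_gt_atTop (max a 0)] with y hy
  have hy_nonneg : 0 ≤ y := (le_max_right a 0).trans hy.le
  have ht : Summable fun k : ℕ => ((y : ℂ) ^ (k + 1))⁻¹ • g k := by
    refine Summable.of_norm ((hsum y ((le_max_left a 0).trans_lt hy)).congr fun k => ?_)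
    rw [norm_smul, norm_inv, norm_pow, Complex.norm_real, Real.norm_of_nonneg hy_nonneg, mul_comm]
  rw [show ((y : ℂ) * Complex.I) • N = -((-(y : ℂ) * Complex.I) • N) by
      rw [neg_mul, neg_smul, neg_neg], exp_mul_one_add_tsum_mul_exp_neg (𝕜 := ℂ) _ ht, ad_smul]
  simp only [map_smul]

/-- let `N` be a nilpotent endomorphism of a finite-dimensional complex
normed space and `g(y) = 1 + Σ_{k ≥ 1} g_k y^{-k}` with `(ad N)^{k+1}(g_k) = 0` and
`Σ ‖g_k‖ y^{-k}` convergent for `y > a`.  Then `e^{-iyN} g(y) e^{iyN}` converges as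
`y → ∞` to `1 + Σ_{k ≥ 1} ((-i)^k / k!) (ad N)^k (g_k)`, the latter series being
absolutely convergent.  (Here `g k` denotes `g_{k+1}`.) -/
theorem zero_loci_stmt16 {V : Type*} [NormedAddCommGroup V] [NormedSpace ℂ V]
    [FiniteDimensional ℂ V]
    (N : V →L[ℂ] V) (hnil : ∃ n : ℕ, N ^ n = 0) (a : ℝ) (ha : 0 < a)
    (g : ℕ → V →L[ℂ] V)
    (hker : ∀ k : ℕ, (fun X : V →L[ℂ] V => N * X - X * N)^[k + 2] (g k) = 0)
    (hsum : ∀ y : ℝ, a < y → Summable fun k : ℕ => ‖g k‖ * (y ^ (k + 1))⁻¹) :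
    (Summable fun k : ℕ =>
      ‖((-Complex.I) ^ (k + 1) * (((k + 1).factorial : ℂ))⁻¹) •
        (fun X : V →L[ℂ] V => N * X - X * N)^[k + 1] (g k)‖) ∧
    Filter.Tendsto
      (fun y : ℝ =>
        NormedSpace.exp ((-(y : ℂ) * Complex.I) • N) *
          (1 + ∑' k : ℕ, ((y : ℂ) ^ (k + 1))⁻¹ • g k) *
          NormedSpace.exp (((y : ℂ) * Complex.I) • N))
      Filter.atTop
      (nhds (1 + ∑' k : ℕ,
        ((-Complex.I) ^ (k + 1) * (((k + 1).factorial : ℂ))⁻¹) •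
          (fun X : V →L[ℂ] V => N * X - X * N)^[k + 1] (g k))) :=
  zero_loci_stmt16_general N a g hker hsum
end
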